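/- arXiv:1610.09767 — 2 statements merged into one kernel-verified Lean document; each statement's English description precedes it below -/
import Mathlib

section
/- Let C be an (n,k,r,2)-SLRC over a finite field F, with 2 ≤ r < k. Then the code rate satisfies k/n ≤ r/(r+2), equivalently n ≥ k + 2k/r. -/
/-!
A recovering set of size at most `r` for a coordinate `i` gives a parity check (a word of the
dual code) of weight at most `r + 1` that is nonzero at `i`; for `t = 2`, of any two coordinates
one has such a check vanishing at the other. Take a basis `B` of the span of these low-weight
checks, so `#B ≤ n - k`, and let `deg i` be the number of rows of `B` nonzero at `i`. Every
coordinate has `deg i ≥ 1`, and a row of `B` contains at most one coordinate of degree one: on two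
such coordinates every vector of the span is a multiple of that row, so it vanishes at both or at
neither. Double counting gives
`2n ≤ ∑ deg i + #{deg i = 1} ≤ #B (r + 1) + #B ≤ (n - k)(r + 2)`, i.e. `(r + 2) k ≤ r n`.
-/

open Finset

def IsRecoveringSet {F : Type*} [Field F] {ι : Type*} [Fintype ι] [DecidableEq ι]
    (C : Submodule F (ι → F)) (i : ι) (R : Finset ι) : Prop :=
  i ∉ R ∧ ∃ a : ι → F, (∀ j ∈ R, a j ≠ 0) ∧ ∀ x ∈ C, x i = ∑ j ∈ R, a j * x j

def IsSLRC {F : Type*} [Field F] {ι : Type*} [Fintype ι] [DecidableEq ι]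
    (C : Submodule F (ι → F)) (r t : ℕ) : Prop :=
  ∀ E : Finset ι, E.card ≤ t →
    ∃ L : List ι, L.Nodup ∧ L.toFinset = E ∧
      ∀ ℓ : Fin L.length, ∃ R : Finset ι,
        IsRecoveringSet C (L.get ℓ) R ∧ R.card ≤ r ∧
        R ⊆ Eᶜ ∪ (L.take ℓ.1).toFinset

open Module Matrix Submodule

section DualCode

variable {F ι : Type*} [Field F] [Fintype ι] [DecidableEq ι]

noncomputable def dualCode (C : Submodule F (ι → F)) : Submodule F (ι → F) :=
  C.dualAnnihilator.comap (dotProductEquiv F ι).toLinearMap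

theorem mem_dualCode {C : Submodule F (ι → F)} {v : ι → F} :
    v ∈ dualCode C ↔ ∀ x ∈ C, v ⬝ᵥ x = 0 := by
  simp [dualCode, mem_dualAnnihilator]

theorem finrank_add_finrank_dualCode (C : Submodule F (ι → F)) :
    finrank F C + finrank F (dualCode C) = Fintype.card ι := by
  rw [dualCode, ((dotProductEquiv F ι).ofSubmodule' _).finrank_eq,
    Subspace.finrank_add_finrank_dualAnnihilator_eq, Module.finrank_fintype_fun_eq_card]

theorem IsRecoveringSet.exists_mem_dualCode {C : Submodule F (ι → F)} {i : ι} {R : Finset ι}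
    (h : IsRecoveringSet C i R) :
    ∃ v ∈ dualCode C, v i ≠ 0 ∧ ∀ j ∉ insert i R, v j = 0 := by
  obtain ⟨hiR, a, -, hrec⟩ := h
  refine ⟨∑ j ∈ R, Pi.single j (a j) - Pi.single i 1, mem_dualCode.2 fun x hx => ?_, ?_, ?_⟩
  · simp [sub_dotProduct, sum_dotProduct, hrec x hx]
  · simp [Finset.sum_apply, Pi.single_apply, hiR]
  · intro j hj
    simp only [mem_insert, not_or] at hj
    simp [Finset.sum_apply, Pi.single_apply, hj.1, hj.2]

end DualCode

section ColumnWeight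

variable {F ι : Type*} [Field F] [DecidableEq F]

def columnWeight (B : Finset (ι → F)) (i : ι) : ℕ := #{b ∈ B | b i ≠ 0}

theorem columnWeight_pos {B : Finset (ι → F)} {v : ι → F}
    (hv : v ∈ span F (B : Set (ι → F))) {i : ι} (hvi : v i ≠ 0) : 0 < columnWeight B i := by
  by_contra! h
  have hB : ∀ b ∈ B, b i = 0 := by simpa [columnWeight, filter_eq_empty_iff] using h
  have hspan : span F (B : Set (ι → F)) ≤ LinearMap.ker (LinearMap.proj i) :=
    span_le.2 fun b hb => hB b hb
  exact hvi (hspan hv)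

theorem sum_smul_apply_of_columnWeight_eq_one {B : Finset (ι → F)} {b : ι → F} (hb : b ∈ B)
    {i : ι} (hbi : b i ≠ 0) (hi : columnWeight B i = 1) (μ : (ι → F) → F) :
    (∑ c ∈ B, μ c • c) i = μ b * b i := by
  obtain ⟨b', hb'⟩ := card_eq_one.1 hi
  have hother : ∀ c ∈ B, c ≠ b → c i = 0 := by
    intro c hc hcb
    by_contra hci
    have hc' : c ∈ ({b'} : Finset _) := hb' ▸ mem_filter.2 ⟨hc, hci⟩
    have hb'' : b ∈ ({b'} : Finset _) := hb' ▸ mem_filter.2 ⟨hb, hbi⟩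
    exact hcb ((mem_singleton.1 hc').trans (mem_singleton.1 hb'').symm)
  rw [Finset.sum_apply, sum_eq_single b (fun c hc hcb => by simp [hother c hc hcb])
    (fun h => absurd hb h), Pi.smul_apply, smul_eq_mul]

theorem apply_eq_zero_iff_of_columnWeight_eq_one {B : Finset (ι → F)} {b : ι → F}
    (hb : b ∈ B) {i j : ι} (hbi : b i ≠ 0) (hbj : b j ≠ 0) (hi : columnWeight B i = 1)
    (hj : columnWeight B j = 1) {v : ι → F} (hv : v ∈ span F (B : Set (ι → F))) :
    v i = 0 ↔ v j = 0 := by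
  obtain ⟨μ, -, rfl⟩ := mem_span_finset.1 hv
  rw [sum_smul_apply_of_columnWeight_eq_one hb hbi hi,
    sum_smul_apply_of_columnWeight_eq_one hb hbj hj]
  simp [hbi, hbj]

variable [Fintype ι]

theorem sum_columnWeight (B : Finset (ι → F)) :
    ∑ i, columnWeight B i = ∑ b ∈ B, hammingNorm b := by
  simp only [columnWeight, hammingNorm, card_filter]
  exact sum_comm

theorem card_filter_columnWeight_eq_one_le_one {B : Finset (ι → F)}
    (hsep : ∀ i j, i ≠ j → ∃ v ∈ span F (B : Set (ι → F)), ¬(v i = 0 ↔ v j = 0))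
    {b : ι → F} (hb : b ∈ B) : #{i | b i ≠ 0 ∧ columnWeight B i = 1} ≤ 1 := by
  refine card_le_one.2 fun i hi j hj => ?_
  by_contra hij
  obtain ⟨v, hv, hvij⟩ := hsep i j hij
  simp only [mem_filter, mem_univ, true_and] at hi hj
  exact hvij (apply_eq_zero_iff_of_columnWeight_eq_one hb hi.1 hj.1 hi.2 hj.2 hv)

theorem card_filter_columnWeight_eq_one_le {B : Finset (ι → F)}
    (hsep : ∀ i j, i ≠ j → ∃ v ∈ span F (B : Set (ι → F)), ¬(v i = 0 ↔ v j = 0)) :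
    #{i | columnWeight B i = 1} ≤ #B := calc
  #{i | columnWeight B i = 1} = ∑ i, #{b ∈ B | b i ≠ 0 ∧ columnWeight B i = 1} := by
    rw [card_filter]
    refine sum_congr rfl fun i _ => ?_
    split_ifs with hi
    · simp only [hi, and_true]
      exact hi.symm
    · simp [hi]
  _ = ∑ b ∈ B, #{i | b i ≠ 0 ∧ columnWeight B i = 1} :=
    sum_card_bipartiteAbove_eq_sum_card_bipartiteBelow _
  _ ≤ ∑ _b ∈ B, 1 := sum_le_sum fun b hb => card_filter_columnWeight_eq_one_le_one hsep hb
  _ = #B := by simp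

theorem two_mul_card_le_card_mul {B : Finset (ι → F)} {w : ℕ}
    (hw : ∀ b ∈ B, hammingNorm b ≤ w)
    (hcover : ∀ i, ∃ v ∈ span F (B : Set (ι → F)), v i ≠ 0)
    (hsep : ∀ i j, i ≠ j → ∃ v ∈ span F (B : Set (ι → F)), ¬(v i = 0 ↔ v j = 0)) :
    2 * Fintype.card ι ≤ #B * (w + 1) := calc
  2 * Fintype.card ι = ∑ _i : ι, 2 := by simp [mul_comm]
  _ ≤ ∑ i, (columnWeight B i + if columnWeight B i = 1 then 1 else 0) := by
    refine sum_le_sum fun i _ => ?_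
    obtain ⟨v, hv, hvi⟩ := hcover i
    have := columnWeight_pos hv hvi
    split_ifs <;> omega
  _ = ∑ b ∈ B, hammingNorm b + #{i | columnWeight B i = 1} := by
    rw [sum_add_distrib, sum_columnWeight, card_filter]
  _ ≤ #B * w + #B :=
    add_le_add (sum_le_card_nsmul _ _ _ hw) (card_filter_columnWeight_eq_one_le hsep)
  _ = #B * (w + 1) := by ring

theorem two_mul_card_le_finrank_span_mul {T : Set (ι → F)} {w : ℕ}
    (hw : ∀ v ∈ T, hammingNorm v ≤ w) (hcover : ∀ i, ∃ v ∈ T, v i ≠ 0)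
    (hsep : ∀ i j, i ≠ j → ∃ v ∈ T, ¬(v i = 0 ↔ v j = 0)) :
    2 * Fintype.card ι ≤ finrank F (span F T) * (w + 1) := by
  obtain ⟨B, hBT, hspan, hli⟩ := exists_linearIndependent F T
  have := hli.setFinite.fintype
  have hT : T ⊆ span F (B.toFinset : Set (ι → F)) := by
    rw [Set.coe_toFinset, hspan]
    exact subset_span
  rw [← hspan, finrank_span_set_eq_card hli]
  refine two_mul_card_le_card_mul (fun b hb => hw b (hBT (Set.mem_toFinset.1 hb)))
    (fun i => ?_) (fun i j hij => ?_)
  · obtain ⟨v, hv, hvi⟩ := hcover i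
    exact ⟨v, hT hv, hvi⟩
  · obtain ⟨v, hv, hvij⟩ := hsep i j hij
    exact ⟨v, hT hv, hvij⟩

end ColumnWeight

namespace IsSLRC

variable {F ι : Type*} [Field F] [Fintype ι] [DecidableEq ι]
  {C : Submodule F (ι → F)} {r t : ℕ}

theorem exists_recoveringSet_disjoint (hC : IsSLRC C r t) {E : Finset ι} (hE : E.Nonempty)
    (hEt : #E ≤ t) :
    ∃ i ∈ E, ∃ R, IsRecoveringSet C i R ∧ #R ≤ r ∧ Disjoint R E := by
  obtain ⟨L, -, hLE, hrec⟩ := hC E hEt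
  have hL : 0 < L.length := by
    rw [List.length_pos_iff, ← List.toFinset_nonempty_iff, hLE]
    exact hE
  obtain ⟨R, hR, hRr, hRE⟩ := hrec ⟨0, hL⟩
  refine ⟨L.get ⟨0, hL⟩, hLE ▸ List.mem_toFinset.2 (List.get_mem _ _), R, hR, hRr, ?_⟩
  simpa [Finset.subset_compl_iff_disjoint_right] using hRE

section

variable [DecidableEq F]

theorem exists_mem_dualCode_of_card_le (hC : IsSLRC C r t) {E : Finset ι} (hE : E.Nonempty)
    (hEt : #E ≤ t) :
    ∃ i ∈ E, ∃ v ∈ dualCode C,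
      hammingNorm v ≤ r + 1 ∧ v i ≠ 0 ∧ ∀ j ∈ E, j ≠ i → v j = 0 := by
  obtain ⟨i, hi, R, hR, hRr, hRE⟩ := hC.exists_recoveringSet_disjoint hE hEt
  obtain ⟨v, hv, hvi, hsupp⟩ := hR.exists_mem_dualCode
  have hnorm : hammingNorm v ≤ r + 1 := calc
    hammingNorm v ≤ #(insert i R) := card_le_card fun j hj => by
      by_contra hjR
      exact (mem_filter.1 hj).2 (hsupp j hjR)
    _ ≤ r + 1 := (card_insert_le i R).trans (Nat.succ_le_succ hRr)
  refine ⟨i, hi, v, hv, hnorm, hvi, fun j hj hji => hsupp j ?_⟩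
  simpa [hji] using disjoint_right.1 hRE hj

theorem exists_mem_dualCode_apply_ne_zero (hC : IsSLRC C r t) (ht : 1 ≤ t) (i : ι) :
    ∃ v ∈ dualCode C, hammingNorm v ≤ r + 1 ∧ v i ≠ 0 := by
  obtain ⟨j, hj, v, hv, hvr, hvj, -⟩ :=
    hC.exists_mem_dualCode_of_card_le (singleton_nonempty i) (by simpa using ht)
  rw [mem_singleton.1 hj] at hvj
  exact ⟨v, hv, hvr, hvj⟩

theorem exists_mem_dualCode_separating (hC : IsSLRC C r t) (ht : 2 ≤ t) {i j : ι}
    (hij : i ≠ j) :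
    ∃ v ∈ dualCode C, hammingNorm v ≤ r + 1 ∧ ¬(v i = 0 ↔ v j = 0) := by
  obtain ⟨m, hm, v, hv, hvr, hvm, hvE⟩ :=
    hC.exists_mem_dualCode_of_card_le (insert_nonempty i {j}) ((card_pair hij).le.trans ht)
  refine ⟨v, hv, hvr, ?_⟩
  rcases mem_insert.1 hm with rfl | hm
  · simp [hvm, hvE j (by simp) hij.symm]
  · obtain rfl := mem_singleton.1 hm
    simp [hvm, hvE i (by simp) hij]

end

theorem two_mul_card_le_finrank_dualCode_mul (hC : IsSLRC C r t) (ht : 2 ≤ t) :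
    2 * Fintype.card ι ≤ finrank F (dualCode C) * (r + 2) := by
  classical
  set T : Set (ι → F) := {v | v ∈ dualCode C ∧ hammingNorm v ≤ r + 1}
  have hTC : span F T ≤ dualCode C := span_le.2 fun v hv => hv.1
  calc 2 * Fintype.card ι ≤ finrank F (span F T) * (r + 1 + 1) :=
        two_mul_card_le_finrank_span_mul (fun v hv => hv.2)
          (fun i => ?_) (fun i j hij => ?_)
    _ ≤ finrank F (dualCode C) * (r + 2) := Nat.mul_le_mul_right _ (finrank_mono hTC)
  · obtain ⟨v, hv, hvr, hvi⟩ := hC.exists_mem_dualCode_apply_ne_zero (by omega) i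
    exact ⟨v, ⟨hv, hvr⟩, hvi⟩
  · obtain ⟨v, hv, hvr, hvij⟩ := hC.exists_mem_dualCode_separating ht hij
    exact ⟨v, ⟨hv, hvr⟩, hvij⟩

theorem mul_finrank_le (hC : IsSLRC C r t) (ht : 2 ≤ t) :
    (r + 2) * finrank F C ≤ r * Fintype.card ι := by
  have hcount := hC.two_mul_card_le_finrank_dualCode_mul ht
  have hdim := finrank_add_finrank_dualCode C
  nlinarith

end IsSLRC

theorem rate_le_of_mul_le {k n r : ℕ} (h : (r + 2) * k ≤ r * n) :
    (k : ℝ) / n ≤ (r : ℝ) / (r + 2) ∧ (k : ℝ) + 2 * k / r ≤ n := by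
  rcases Nat.eq_zero_or_pos k with rfl | hk
  · simp only [CharP.cast_eq_zero, zero_div, mul_zero, add_zero]
    exact ⟨by positivity, by positivity⟩
  have hr : 0 < r := by nlinarith
  have hn : 0 < n := by nlinarith
  have hR : ((r : ℝ) + 2) * k ≤ r * n := by exact_mod_cast h
  have hrR : (0 : ℝ) < r := by exact_mod_cast hr
  have hnR : (0 : ℝ) < n := by exact_mod_cast hn
  constructor
  · rw [div_le_div_iff₀ hnR (by positivity)]
    linarith
  · rw [← le_sub_iff_add_le', div_le_iff₀ hrR]
    linarith

theorem rate_bound_t2_general {F : Type*} [Field F] {n k r : ℕ}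
    (C : Submodule F (Fin n → F)) (hk : Module.finrank F C = k)
    (hC : IsSLRC C r 2) :
    (k : ℝ) / n ≤ (r : ℝ) / (r + 2) ∧ (k : ℝ) + 2 * k / r ≤ n := by
  classical
  apply rate_le_of_mul_le
  simpa [hk] using hC.mul_finrank_le le_rfl

/-- The rate of an `(n,k,r,2)`-SLRC satisfies `k/n ≤ r/(r+2)`,
equivalently `n ≥ k + 2k/r`. -/
theorem rate_bound_t2 {F : Type*} [Field F] [Fintype F] {n k r : ℕ}
    (C : Submodule F (Fin n → F)) (hk : Module.finrank F C = k)
    (hr2 : 2 ≤ r) (hrk : r < k) (hC : IsSLRC C r 2) :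
    (k : ℝ) / n ≤ (r : ℝ) / (r + 2) ∧ (k : ℝ) + 2 * k / r ≤ n :=
  rate_bound_t2_general C hk hC
end

section
/- Fix integers r ≥ 2, m ≥ 1, and 1 ≤ t ≤ 2^m − 1, and let C be a binary linear code with coordinates indexed by Ω_t^{(m)} whose codewords satisfy x_α = Σ_{β∈L(α)} x_β for all α ∈ Ω_t^{(m)}\Ω_0^{(m)}. For α ∈ Ω_t^{(m)} and ℓ ∈ [m], let L^{(ℓ)}_α be the set of the r+1 points of Z_{r+1}^m agreeing with α in every coordinate except possibly the ℓ-th. If L^{(ℓ)}_α ⊆ Ω_t^{(m)}, then R = L^{(ℓ)}_α \ {α} is a recovering set of α of size r, i.e., x_α = Σ_{β∈R} x_β for every codeword x ∈ C. -/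
open Finset

/-- `supp_m(s)`: the support of the `m`-digit binary representation of `s`,
with digit `ℓ` (0-indexed) corresponding to `2^ℓ`. -/
def suppm (m s : ℕ) : Finset (Fin m) :=
  Finset.univ.filter (fun ℓ => s.testBit ℓ.val)

/-- `U(α) = {ℓ ∈ [m] : α_ℓ = r}`, for `α ∈ Z_{r+1}^m`. -/
def Uset (r m : ℕ) (α : Fin m → Fin (r + 1)) : Finset (Fin m) :=
  Finset.univ.filter (fun ℓ => (α ℓ : ℕ) = r)

/-- `L(α) = {β ∈ Z_r^m : β_ℓ = α_ℓ for all ℓ with α_ℓ < r}`, with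
`Z_r ⊆ Z_{r+1}` viewed as the elements of value `< r`. -/
def Lset (r m : ℕ) (α : Fin m → Fin (r + 1)) : Finset (Fin m → Fin (r + 1)) :=
  Finset.univ.filter (fun β =>
    (∀ ℓ, (β ℓ : ℕ) < r) ∧ ∀ ℓ, (α ℓ : ℕ) < r → β ℓ = α ℓ)

/-- `Γ_s = {α ∈ Z_{r+1}^m : U(α) = supp_m(s)}`. -/
def Gam (r m s : ℕ) : Finset (Fin m → Fin (r + 1)) :=
  Finset.univ.filter (fun α => Uset r m α = suppm m s)

/-- `Ω_t^{(m)} = ⋃_{s=0}^{t} Γ_s`. -/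
def Omeg (r m t : ℕ) : Finset (Fin m → Fin (r + 1)) :=
  (Finset.range (t + 1)).biUnion (Gam r m)

/-- The coordinate index set `Ω_t^{(m)}` as a type. -/
abbrev OmegIdx (r m t : ℕ) : Type := {α : Fin m → Fin (r + 1) // α ∈ Omeg r m t}

/-- The columns of the row of `H_t^{(m)}` indexed by `α`, other than `α` itself:
the coordinates in `Ω_t^{(m)}` whose index lies in `L(α)`. -/
def LIdx (r m t : ℕ) (α : Fin m → Fin (r + 1)) : Finset (OmegIdx r m t) :=
  Finset.univ.filter (fun β => β.1 ∈ Lset r m α)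

/-- `L^{(ℓ)}_α`: the `r+1` points of `Z_{r+1}^m` agreeing with `α` in every
coordinate except possibly the `ℓ`-th. -/
def Lline (r m : ℕ) (α : Fin m → Fin (r + 1)) (ℓ : Fin m) : Finset (Fin m → Fin (r + 1)) :=
  Finset.univ.filter (fun β => ∀ j, j ≠ ℓ → β j = α j)

/-! Write `p_i` for the point of `L^{(ℓ)}_α` with `ℓ`-th coordinate `i`. Every codeword satisfies
`x_γ = ∑_{β ∈ L(γ)} x_β` at every coordinate `γ` (trivially when `γ ∈ Ω_0`, where `L(γ) = {γ}`),
and `L(p_r)` is the disjoint union of the `L(p_i)`, `i < r`, split by the value at `ℓ`. Hence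
`x_{p_r} = ∑_{i<r} x_{p_i}`, so over `𝔽₂` the whole line sums to zero and `x_α` is the sum of the
other `r` points. -/

open Function

section Points

variable {r m : ℕ}

lemma mem_Lset_iff {γ β : Fin m → Fin (r + 1)} :
    β ∈ Lset r m γ ↔ (∀ j, (β j : ℕ) < r) ∧ ∀ j, (γ j : ℕ) < r → β j = γ j := by
  simp [Lset]

lemma mem_Omeg_zero_iff {γ : Fin m → Fin (r + 1)} :
    γ ∈ Omeg r m 0 ↔ ∀ j, (γ j : ℕ) < r := by
  simp only [Omeg, zero_add, range_one, singleton_biUnion, Gam, Uset, suppm, Nat.zero_testBit,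
    Bool.false_eq_true, filter_false, Finset.ext_iff, mem_filter, mem_univ, true_and,
    notMem_empty, iff_false]
  exact forall_congr' fun j => by have := (γ j).isLt; omega

lemma Lset_eq_singleton {γ : Fin m → Fin (r + 1)} (hγ : ∀ j, (γ j : ℕ) < r) :
    Lset r m γ = {γ} := by
  ext β
  simp only [mem_Lset_iff, mem_singleton]
  constructor
  · exact fun ⟨_, hβ⟩ => funext fun j => hβ j (hγ j)
  · rintro rfl
    exact ⟨hγ, fun _ _ => rfl⟩

lemma filter_Lset_update_last (α : Fin m → Fin (r + 1)) (ℓ : Fin m) (i : Fin r) :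
    (Lset r m (update α ℓ (Fin.last r))).filter (fun β => β ℓ = i.castSucc) =
      Lset r m (update α ℓ i.castSucc) := by
  ext β
  simp only [mem_filter, mem_Lset_iff]
  constructor
  · rintro ⟨⟨hβ, hαβ⟩, hℓ⟩
    refine ⟨hβ, fun j hj => ?_⟩
    rcases eq_or_ne j ℓ with rfl | hjℓ
    · simpa using hℓ
    · simp only [update_of_ne hjℓ] at hj ⊢
      simpa [update_of_ne hjℓ, hj] using hαβ j
  · rintro ⟨hβ, hαβ⟩
    refine ⟨⟨hβ, fun j hj => ?_⟩, by simpa using hαβ ℓ⟩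
    rcases eq_or_ne j ℓ with rfl | hjℓ
    · simp at hj
    · simp only [update_of_ne hjℓ] at hj ⊢
      simpa [update_of_ne hjℓ, hj] using hαβ j

lemma mem_Lline_iff {α β : Fin m → Fin (r + 1)} {ℓ : Fin m} :
    β ∈ Lline r m α ℓ ↔ ∃ i, update α ℓ i = β := by
  simp only [Lline, mem_filter, mem_univ, true_and]
  constructor
  · intro h
    exact ⟨β ℓ, funext fun j => by rcases eq_or_ne j ℓ with rfl | hj <;> simp [*]⟩
  · rintro ⟨i, rfl⟩ j hj
    exact update_of_ne hj _ _

end Points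

section Coordinates

variable {r m t : ℕ}

lemma LIdx_eq_singleton {γ : OmegIdx r m t} (hγ : γ.1 ∈ Omeg r m 0) : LIdx r m t γ.1 = {γ} := by
  ext β
  simp only [LIdx, mem_filter, mem_univ, true_and, Lset_eq_singleton (mem_Omeg_zero_iff.1 hγ),
    mem_singleton, Subtype.ext_iff]

lemma sum_LIdx_update_last {M : Type*} [AddCommMonoid M] (f : OmegIdx r m t → M)
    (α : Fin m → Fin (r + 1)) (ℓ : Fin m) :
    ∑ β ∈ LIdx r m t (update α ℓ (Fin.last r)), f β =
      ∑ i : Fin r, ∑ β ∈ LIdx r m t (update α ℓ i.castSucc), f β := by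
  have hmaps : ∀ β ∈ LIdx r m t (update α ℓ (Fin.last r)),
      β.1 ℓ ∈ univ.map Fin.castSuccEmb := by
    intro β hβ
    simp only [LIdx, mem_filter, mem_univ, true_and, mem_Lset_iff] at hβ
    simp only [mem_map, mem_univ, true_and, Fin.coe_castSuccEmb, Fin.exists_castSucc_eq]
    exact fun h => (hβ.1 ℓ).ne (by simp [h])
  rw [← sum_fiberwise_of_maps_to hmaps, sum_map]
  refine sum_congr rfl fun i _ => ?_
  congr 1
  ext β
  rw [mem_filter]
  simp only [LIdx, mem_filter, mem_univ, true_and, Fin.coe_castSuccEmb,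
    ← filter_Lset_update_last α ℓ i]

def linePoint {α : Fin m → Fin (r + 1)} {ℓ : Fin m} (hsub : Lline r m α ℓ ⊆ Omeg r m t)
    (i : Fin (r + 1)) : OmegIdx r m t :=
  ⟨update α ℓ i, hsub (mem_Lline_iff.2 ⟨i, rfl⟩)⟩

lemma linePoint_injective {α : Fin m → Fin (r + 1)} {ℓ : Fin m}
    (hsub : Lline r m α ℓ ⊆ Omeg r m t) : Injective (linePoint hsub) := fun i j h => by
  simpa [linePoint] using congrFun (congrArg Subtype.val h) ℓ

lemma filter_mem_Lline_eq_image {α : Fin m → Fin (r + 1)} {ℓ : Fin m}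
    (hsub : Lline r m α ℓ ⊆ Omeg r m t) :
    univ.filter (fun β : OmegIdx r m t => β.1 ∈ Lline r m α ℓ) = univ.image (linePoint hsub) := by
  ext β
  simp [mem_Lline_iff, linePoint, Subtype.ext_iff]

variable (C : Submodule (ZMod 2) (OmegIdx r m t → ZMod 2))
  (hC : ∀ x ∈ C, ∀ α : OmegIdx r m t, α.1 ∉ Omeg r m 0 → x α = ∑ β ∈ LIdx r m t α.1, x β)
include hC

lemma eq_sum_LIdx {x : OmegIdx r m t → ZMod 2} (hx : x ∈ C) (γ : OmegIdx r m t) :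
    x γ = ∑ β ∈ LIdx r m t γ.1, x β := by
  by_cases h0 : γ.1 ∈ Omeg r m 0
  · rw [LIdx_eq_singleton h0, sum_singleton]
  · exact hC x hx γ h0

lemma sum_linePoint_eq_zero {x : OmegIdx r m t → ZMod 2} (hx : x ∈ C)
    {α : Fin m → Fin (r + 1)} {ℓ : Fin m} (hsub : Lline r m α ℓ ⊆ Omeg r m t) :
    ∑ i, x (linePoint hsub i) = 0 := by
  have hlast : x (linePoint hsub (Fin.last r)) = ∑ i : Fin r, x (linePoint hsub i.castSucc) := by
    rw [eq_sum_LIdx C hC hx (linePoint hsub _)]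
    change ∑ β ∈ LIdx r m t (update α ℓ (Fin.last r)), x β = _
    rw [sum_LIdx_update_last]
    exact sum_congr rfl fun i _ => (eq_sum_LIdx C hC hx (linePoint hsub i.castSucc)).symm
  rw [Fin.sum_univ_castSucc, ← hlast, CharTwo.add_self_eq_zero]

end Coordinates

theorem line_is_recovering_set_general (r m t : ℕ)
    (C : Submodule (ZMod 2) (OmegIdx r m t → ZMod 2))
    (hC : ∀ x ∈ C, ∀ α : OmegIdx r m t, α.1 ∉ Omeg r m 0 →
      x α = ∑ β ∈ LIdx r m t α.1, x β)
    (α : OmegIdx r m t) (ℓ : Fin m) (hsub : Lline r m α.1 ℓ ⊆ Omeg r m t) :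
    (Finset.univ.filter (fun β : OmegIdx r m t =>
        β.1 ∈ Lline r m α.1 ℓ ∧ β ≠ α)).card = r ∧
    α ∉ Finset.univ.filter (fun β : OmegIdx r m t => β.1 ∈ Lline r m α.1 ℓ ∧ β ≠ α) ∧
    ∀ x ∈ C, x α = ∑ β ∈ Finset.univ.filter (fun β : OmegIdx r m t =>
        β.1 ∈ Lline r m α.1 ℓ ∧ β ≠ α), x β := by
  set S := univ.filter (fun β : OmegIdx r m t => β.1 ∈ Lline r m α.1 ℓ)
  have hR : univ.filter (fun β : OmegIdx r m t => β.1 ∈ Lline r m α.1 ℓ ∧ β ≠ α) = S.erase α := by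
    rw [← filter_filter, filter_ne']
  have hαS : α ∈ S := by simp [S, mem_Lline_iff]
  have hS : S = univ.image (linePoint hsub) := filter_mem_Lline_eq_image hsub
  rw [hR]
  refine ⟨?_, notMem_erase α S, fun x hx => ?_⟩
  · rw [card_erase_of_mem hαS, hS, card_image_of_injective _ (linePoint_injective hsub)]
    simp
  · have hsum : x α + ∑ β ∈ S.erase α, x β = 0 := by
      rw [add_sum_erase S x hαS, hS, sum_image fun i _ j _ h => linePoint_injective hsub h]
      exact sum_linePoint_eq_zero C hC hx hsub
    exact CharTwo.add_eq_zero.1 hsum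

/-- Lemma 7: if `C` is a binary linear code on the coordinates `Ω_t^{(m)}` whose
codewords satisfy `x_α = ∑_{β ∈ L(α)} x_β` for all `α ∈ Ω_t^{(m)} \ Ω_0^{(m)}`, and
`L^{(ℓ)}_α ⊆ Ω_t^{(m)}`, then `R = L^{(ℓ)}_α \ {α}` is a recovering set of `α` of
size `r`. -/
theorem line_is_recovering_set (r m t : ℕ) (hr : 2 ≤ r) (ht1 : 1 ≤ t) (ht2 : t ≤ 2 ^ m - 1)
    (C : Submodule (ZMod 2) (OmegIdx r m t → ZMod 2))
    (hC : ∀ x ∈ C, ∀ α : OmegIdx r m t, α.1 ∉ Omeg r m 0 →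
      x α = ∑ β ∈ LIdx r m t α.1, x β)
    (α : OmegIdx r m t) (ℓ : Fin m) (hsub : Lline r m α.1 ℓ ⊆ Omeg r m t) :
    (Finset.univ.filter (fun β : OmegIdx r m t =>
        β.1 ∈ Lline r m α.1 ℓ ∧ β ≠ α)).card = r ∧
    α ∉ Finset.univ.filter (fun β : OmegIdx r m t => β.1 ∈ Lline r m α.1 ℓ ∧ β ≠ α) ∧
    ∀ x ∈ C, x α = ∑ β ∈ Finset.univ.filter (fun β : OmegIdx r m t =>
        β.1 ∈ Lline r m α.1 ℓ ∧ β ≠ α), x β :=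
  line_is_recovering_set_general r m t C hC α ℓ hsub
end
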